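/- Let X_1, ..., X_D be independent square-integrable real-valued random variables (representing feature components), let g_1, ..., g_D be measurable real-valued functions with each g_j(X_j) square-integrable, let the additive model output be f = Σ_{j=1}^{D} g_j(X_j), and let Y be a square-integrable real-valued target random variable. Let X_1' have the same distribution as X_1 and be independent of (X_1, ..., X_D, Y). Then the expected importance score of feature 1, defined as E[(Y - (g_1(X_1') + Σ_{j=2}^{D} g_j(X_j)))^2] - E[(Y - Σ_{j=1}^{D} g_j(X_j))^2], equals 2*[cov(Y, g_1(X_1)) - Σ_{j=2}^{D} cov(g_1(X_1), g_j(X_j))], where cov denotes covariance. -/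

import Mathlib

/-!
Write `Z := Y - Σ_{j ≠ 0} g_j(X_j)`, so that both losses are `E[(Z - B)²]` with `B = g_0(X_0)` or
`B = g_0(X_1')`, and `E[(Z - B)²] = Var Z - 2 cov(Z, B) + Var B + (E Z - E B)²`. The copy
`g_0(X_1')` has the same mean and variance as `g_0(X_0)` but is independent of `Z`, so the
importance score is `2 cov(g_0(X_0), Z)`, which expands by bilinearity of the covariance.
-/

open MeasureTheory ProbabilityTheory Finset

/-- Covariance of two real-valued random variables w.r.t. a measure `μ`. -/
noncomputable def cov {Ω : Type*} [MeasurableSpace Ω] (μ : Measure Ω) (X Y : Ω → ℝ) : ℝ :=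
  ∫ ω, (X ω - ∫ ω', X ω' ∂μ) * (Y ω - ∫ ω', Y ω' ∂μ) ∂μ

lemma cov_eq_covariance {Ω : Type*} [MeasurableSpace Ω] (μ : Measure Ω) (X Y : Ω → ℝ) :
    cov μ X Y = cov[X, Y; μ] := rfl

section

variable {Ω : Type*} [MeasurableSpace Ω] {μ : Measure Ω} [IsProbabilityMeasure μ]

lemma integral_sq_sub_eq {Z B : Ω → ℝ} (hZ : MemLp Z 2 μ) (hB : MemLp B 2 μ) :
    ∫ ω, (Z ω - B ω) ^ 2 ∂μ
      = Var[Z; μ] - 2 * cov[Z, B; μ] + Var[B; μ] + (μ[Z] - μ[B]) ^ 2 := by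
  have h : Var[Z - B; μ] = ∫ ω, (Z ω - B ω) ^ 2 ∂μ - (∫ ω, (Z ω - B ω) ∂μ) ^ 2 :=
    variance_eq_sub (hZ.sub hB)
  rw [variance_sub hZ hB, integral_sub (hZ.integrable one_le_two) (hB.integrable one_le_two)] at h
  linarith

lemma integral_sq_sub_indepCopy_sub_integral_sq_sub {Z A A' : Ω → ℝ} (hZ : MemLp Z 2 μ)
    (hA : MemLp A 2 μ) (hid : IdentDistrib A' A μ μ) (hindep : IndepFun A' Z μ) :
    ∫ ω, (Z ω - A' ω) ^ 2 ∂μ - ∫ ω, (Z ω - A ω) ^ 2 ∂μ = 2 * cov[A, Z; μ] := by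
  have hA' : MemLp A' 2 μ := hid.symm.memLp_snd hA
  rw [integral_sq_sub_eq hZ hA', integral_sq_sub_eq hZ hA, hid.variance_eq, hid.integral_eq,
    covariance_comm Z A', hindep.covariance_eq_zero hA' hZ, covariance_comm Z A]
  ring

end

theorem expected_importance_score_additive_general
    {Ω : Type*} [MeasurableSpace Ω] (μ : Measure Ω) [IsProbabilityMeasure μ]
    (D : ℕ) [NeZero D]
    (X : Fin D → Ω → ℝ)
    (g : Fin D → ℝ → ℝ) (hgmeas : ∀ j, Measurable (g j))
    (hgL2 : ∀ j, MemLp (fun ω => g j (X j ω)) 2 μ)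
    (Y : Ω → ℝ) (hY : MemLp Y 2 μ)
    (X₁' : Ω → ℝ)
    (hid : IdentDistrib X₁' (X 0) μ μ)
    (hindep : IndepFun X₁' (fun ω => ((fun j => X j ω), Y ω)) μ) :
    (∫ ω, (Y ω - (g 0 (X₁' ω) + ∑ j ∈ univ.erase 0, g j (X j ω))) ^ 2 ∂μ)
      - (∫ ω, (Y ω - ∑ j, g j (X j ω)) ^ 2 ∂μ)
      = 2 * (cov μ Y (fun ω => g 0 (X 0 ω))
          - ∑ j ∈ univ.erase 0, cov μ (fun ω => g 0 (X 0 ω)) (fun ω => g j (X j ω))) := by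
  set S : Ω → ℝ := fun ω => ∑ j ∈ univ.erase 0, g j (X j ω)
  have hS : MemLp S 2 μ := memLp_finsetSum (univ.erase 0) fun j _ => hgL2 j
  have hsplit : ∀ ω, ∑ j, g j (X j ω) = g 0 (X 0 ω) + S ω := fun ω =>
    (add_sum_erase univ (fun j => g j (X j ω)) (mem_univ 0)).symm
  have hindep_copy : IndepFun (fun ω => g 0 (X₁' ω)) (fun ω => Y ω - S ω) μ :=
    hindep.comp (ψ := fun p : (Fin D → ℝ) × ℝ => p.2 - ∑ j ∈ univ.erase 0, g j (p.1 j))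
      (hgmeas 0) (by fun_prop)
  have key := integral_sq_sub_indepCopy_sub_integral_sq_sub (Z := fun ω => Y ω - S ω)
    (A' := fun ω => g 0 (X₁' ω)) (hY.sub hS) (hgL2 0) (hid.comp (hgmeas 0)) hindep_copy
  simp only [hsplit, sub_add_eq_sub_sub_swap, cov_eq_covariance]
  refine key.trans ?_
  rw [covariance_fun_sub_right (hgL2 0) hY hS,
    covariance_fun_sum_right' (fun j _ => hgL2 j) (hgL2 0), covariance_comm]

/-- Permutation importance of feature `0` in an additive model `f = Σ_j g_j (X j)` over
independent features: replacing `X 0` by an independent copy `X₁'` changes the expected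
quadratic loss against the target `Y` by
`2 * (cov(Y, g 0 (X 0)) - Σ_{j ≠ 0} cov(g 0 (X 0), g j (X j)))`. -/
theorem expected_importance_score_additive
    {Ω : Type*} [MeasurableSpace Ω] (μ : Measure Ω) [IsProbabilityMeasure μ]
    (D : ℕ) [NeZero D]
    (X : Fin D → Ω → ℝ) (hXmeas : ∀ j, Measurable (X j))
    (hXL2 : ∀ j, MemLp (X j) 2 μ)
    (hXindep : iIndepFun X μ)
    (g : Fin D → ℝ → ℝ) (hgmeas : ∀ j, Measurable (g j))
    (hgL2 : ∀ j, MemLp (fun ω => g j (X j ω)) 2 μ)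
    (Y : Ω → ℝ) (hY : MemLp Y 2 μ)
    (X₁' : Ω → ℝ) (hX₁'meas : Measurable X₁')
    (hid : IdentDistrib X₁' (X 0) μ μ)
    (hindep : IndepFun X₁' (fun ω => ((fun j => X j ω), Y ω)) μ) :
    (∫ ω, (Y ω - (g 0 (X₁' ω) + ∑ j ∈ univ.erase 0, g j (X j ω))) ^ 2 ∂μ)
      - (∫ ω, (Y ω - ∑ j, g j (X j ω)) ^ 2 ∂μ)
      = 2 * (cov μ Y (fun ω => g 0 (X 0 ω))
          - ∑ j ∈ univ.erase 0, cov μ (fun ω => g 0 (X 0 ω)) (fun ω => g j (X j ω))) :=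
  expected_importance_score_additive_general μ D X g hgmeas hgL2 Y hY X₁' hid hindep
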